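/- arXiv:1309.0680 — 2 statements merged into one kernel-verified Lean document; each statement's English description precedes it below -/
import Mathlib

section
/- Let G be a graph with a 2-join (X1,X2) with split (X1,X2,A1,B1,A2,B2), and let P be an induced path of G whose two end-vertices both lie in X2. Then either (1) there exist a ∈ A1, b ∈ B1 such that V(P) ⊆ X2 ∪ {a,b}, and moreover if both a,b belong to V(P) then a and b are non-adjacent; or (2) P can be written as c-...-a2-a-...-b-b2-...-c' where a ∈ A1, b ∈ B1, a2 ∈ A2, b2 ∈ B2, the subpaths from c to a2 and from b2 to c' lie entirely in X2, and the subpath from a to b lies entirely in X1. -/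
open SimpleGraph

universe u

namespace BSP

variable {V : Type*}

/-- A walk is induced: any two adjacent vertices of its support are consecutive on it. -/
def IsInducedWalk (G : SimpleGraph V) {u v : V} (p : G.Walk u v) : Prop :=
  ∀ x ∈ p.support, ∀ y ∈ p.support, G.Adj x y → s(x, y) ∈ p.edges

/-- An induced path. -/
def IsInducedPath (G : SimpleGraph V) {u v : V} (p : G.Walk u v) : Prop :=
  p.IsPath ∧ IsInducedWalk G p

/-- An induced cycle. -/
def IsInducedCycle (G : SimpleGraph V) {u : V} (p : G.Walk u u) : Prop :=
  p.IsCycle ∧ IsInducedWalk G p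

/-- `G` has an odd hole: an induced odd cycle of length at least 5. -/
def HasOddHole (G : SimpleGraph V) : Prop :=
  ∃ (u : V) (p : G.Walk u u), IsInducedCycle G p ∧ Odd p.length ∧ 5 ≤ p.length

/-- A graph is Berge if neither it nor its complement has an odd hole. -/
def Berge (G : SimpleGraph V) : Prop := ¬ HasOddHole G ∧ ¬ HasOddHole Gᶜ

/-- `x` is an interior vertex of the walk `p`. -/
def Interior {G : SimpleGraph V} {u v : V} (p : G.Walk u v) (x : V) : Prop :=
  x ∈ p.support ∧ x ≠ u ∧ x ≠ v

/-- A skew partition `(A, B)` of `G`. -/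
def IsSkewPartition (G : SimpleGraph V) (A B : Set V) : Prop :=
  A.Nonempty ∧ B.Nonempty ∧ Disjoint A B ∧ A ∪ B = Set.univ ∧
  ¬ (G.induce A).Connected ∧ ¬ ((Gᶜ).induce B).Connected

/-- A balanced skew partition. -/
def IsBalancedSkewPartition (G : SimpleGraph V) (A B : Set V) : Prop :=
  IsSkewPartition G A B ∧
  (∀ (x y : V) (p : G.Walk x y), IsInducedPath G p → 2 ≤ p.length →
     x ∈ B → y ∈ B → (∀ z, Interior p z → z ∈ A) → Even p.length) ∧
  (∀ (x y : V) (q : (Gᶜ).Walk x y), IsInducedPath Gᶜ q → 2 ≤ q.length →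
     x ∈ A → y ∈ A → (∀ z, Interior q z → z ∈ B) → Even q.length)

def HasBalancedSkewPartition (G : SimpleGraph V) : Prop :=
  ∃ A B : Set V, IsBalancedSkewPartition G A B

def IsSkewCutset (G : SimpleGraph V) (B : Set V) : Prop :=
  IsSkewPartition G Bᶜ B

def IsBalancedSkewCutset (G : SimpleGraph V) (B : Set V) : Prop :=
  IsBalancedSkewPartition G Bᶜ B

/-- `C` is a cutset of `G`. -/
def IsCutset (G : SimpleGraph V) (C : Set V) : Prop :=
  ¬ (G.induce (Cᶜ : Set V)).Connected

/-- A star: a set with a vertex adjacent to all the others in it. -/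
def IsStar (G : SimpleGraph V) (B : Set V) : Prop :=
  ∃ x ∈ B, ∀ y ∈ B, y ≠ x → G.Adj x y

def HasStarCutset (G : SimpleGraph V) : Prop :=
  ∃ B : Set V, IsStar G B ∧ IsCutset G B

/-- A 2-join of `G` with split `(X1, X2, A1, B1, A2, B2)`. -/
def IsTwoJoinSplit (G : SimpleGraph V) (X1 X2 A1 B1 A2 B2 : Set V) : Prop :=
  Disjoint X1 X2 ∧ X1 ∪ X2 = Set.univ ∧
  A1 ⊆ X1 ∧ B1 ⊆ X1 ∧ A2 ⊆ X2 ∧ B2 ⊆ X2 ∧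
  Disjoint A1 B1 ∧ Disjoint A2 B2 ∧
  A1.Nonempty ∧ B1.Nonempty ∧ A2.Nonempty ∧ B2.Nonempty ∧
  (∀ a1 ∈ A1, ∀ a2 ∈ A2, G.Adj a1 a2) ∧
  (∀ b1 ∈ B1, ∀ b2 ∈ B2, G.Adj b1 b2) ∧
  (∀ x ∈ X1, ∀ y ∈ X2, G.Adj x y → (x ∈ A1 ∧ y ∈ A2) ∨ (x ∈ B1 ∧ y ∈ B2))

/-- Reachability inside a set of vertices. -/
def ReachIn (G : SimpleGraph V) (S : Set V) (u v : V) : Prop :=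
  ∃ p : G.Walk u v, ∀ x ∈ p.support, x ∈ S

/-- Every component of `G[X]` meets both `A` and `B`. -/
def SideConnected (G : SimpleGraph V) (X A B : Set V) : Prop :=
  ∀ v ∈ X, (∃ a ∈ A, ReachIn G X v a) ∧ (∃ b ∈ B, ReachIn G X v b)

def IsConnectedTwoJoin (G : SimpleGraph V) (X1 X2 A1 B1 A2 B2 : Set V) : Prop :=
  IsTwoJoinSplit G X1 X2 A1 B1 A2 B2 ∧
  SideConnected G X1 A1 B1 ∧ SideConnected G X2 A2 B2

/-- `X` has at least 3 vertices and is not a path of length 2 from `A` to `B`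
with interior in `X \ (A ∪ B)`. -/
def SideSubstantial (G : SimpleGraph V) (X A B : Set V) : Prop :=
  3 ≤ X.ncard ∧
  ¬ ∃ a ∈ A, ∃ b ∈ B, ∃ c ∈ X \ (A ∪ B),
      X = {a, c, b} ∧ G.Adj a c ∧ G.Adj c b ∧ ¬ G.Adj a b

def IsSubstantialTwoJoin (G : SimpleGraph V) (X1 X2 A1 B1 A2 B2 : Set V) : Prop :=
  IsTwoJoinSplit G X1 X2 A1 B1 A2 B2 ∧
  SideSubstantial G X1 A1 B1 ∧ SideSubstantial G X2 A2 B2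

def IsProperTwoJoin (G : SimpleGraph V) (X1 X2 A1 B1 A2 B2 : Set V) : Prop :=
  IsConnectedTwoJoin G X1 X2 A1 B1 A2 B2 ∧
  SideSubstantial G X1 A1 B1 ∧ SideSubstantial G X2 A2 B2

/-- A degenerate 2-join. -/
def IsDegenerate (G : SimpleGraph V) (X1 X2 A1 B1 A2 B2 : Set V) : Prop :=
  (∃ v ∈ A1, ∀ w ∈ X1 \ A1, ¬ G.Adj v w) ∨
  (∃ v ∈ B1, ∀ w ∈ X1 \ B1, ¬ G.Adj v w) ∨
  (∃ v ∈ A2, ∀ w ∈ X2 \ A2, ¬ G.Adj v w) ∨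
  (∃ v ∈ B2, ∀ w ∈ X2 \ B2, ¬ G.Adj v w) ∨
  IsSkewCutset G (A1 ∪ A2) ∨ IsSkewCutset G (B1 ∪ B2) ∨
  ¬ (SideConnected G X1 A1 B1 ∧ SideConnected G X2 A2 B2) ∨
  (∃ v ∈ A1, ∀ w ∈ B1, G.Adj v w) ∨ (∃ v ∈ B1, ∀ w ∈ A1, G.Adj v w) ∨
  (∃ v ∈ A2, ∀ w ∈ B2, G.Adj v w) ∨ (∃ v ∈ B2, ∀ w ∈ A2, G.Adj v w) ∨
  (∃ v ∈ X1 \ (A1 ∪ B1), ∀ w ∈ A1 ∪ B1, G.Adj v w) ∨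
  (∃ v ∈ X2 \ (A2 ∪ B2), ∀ w ∈ A2 ∪ B2, G.Adj v w)

/-- An induced path from `A` to `B` with no interior vertex in `A ∪ B`. -/
def CrossPath (G : SimpleGraph V) (A B : Set V) {u v : V} (p : G.Walk u v) : Prop :=
  IsInducedPath G p ∧ u ∈ A ∧ v ∈ B ∧ ∀ x, Interior p x → x ∉ A ∪ B

/-- An induced path of length at least 2 with both ends in `S` and no interior vertex in `S`. -/
def OutgoingPath (G : SimpleGraph V) (S : Set V) {u v : V} (p : G.Walk u v) : Prop :=
  IsInducedPath G p ∧ 2 ≤ p.length ∧ u ∈ S ∧ v ∈ S ∧ ∀ x, Interior p x → x ∉ S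

def claw : SimpleGraph (Fin 1 ⊕ Fin 3) := completeBipartiteGraph (Fin 1) (Fin 3)

def diamond : SimpleGraph (Fin 4) := (⊤ : SimpleGraph (Fin 4)).deleteEdges {s(0, 1)}

def ClawFree (G : SimpleGraph V) : Prop := IsEmpty (claw ↪g G)

def DiamondFree (G : SimpleGraph V) : Prop := IsEmpty (diamond ↪g G)

def IsLineGraphOfBipartite {V : Type u} (G : SimpleGraph V) : Prop :=
  ∃ (W : Type u) (H : SimpleGraph W), H.Colorable 2 ∧ Nonempty (G ≃g H.lineGraph)

/-- Double split graph structure. -/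
structure IsDoubleSplit (G : SimpleGraph V) (m n : ℕ)
    (a b : Fin m → V) (c d : Fin n → V) : Prop where
  hm : 2 ≤ m
  hn : 2 ≤ n
  inj : Function.Injective (Sum.elim (Sum.elim a b) (Sum.elim c d))
  cover : Set.range a ∪ Set.range b ∪ Set.range c ∪ Set.range d = Set.univ
  hab : ∀ i, G.Adj (a i) (b i)
  habne : ∀ i i', i ≠ i' →
    ¬ G.Adj (a i) (a i') ∧ ¬ G.Adj (a i) (b i') ∧ ¬ G.Adj (b i) (b i')
  hcd : ∀ j, ¬ G.Adj (c j) (d j)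
  hcdall : ∀ j j', j ≠ j' →
    G.Adj (c j) (c j') ∧ G.Adj (c j) (d j') ∧ G.Adj (d j) (d j')
  cross : ∀ i j,
    (G.Adj (a i) (c j) ∧ G.Adj (b i) (d j) ∧ ¬ G.Adj (a i) (d j) ∧ ¬ G.Adj (b i) (c j)) ∨
    (G.Adj (a i) (d j) ∧ G.Adj (b i) (c j) ∧ ¬ G.Adj (a i) (c j) ∧ ¬ G.Adj (b i) (d j))

/-- Path-double split graph structure. -/
structure IsPathDoubleSplit (G : SimpleGraph V) (m n : ℕ)
    (a b : Fin m → V) (c d : Fin n → V) (E : Set V) : Prop where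
  hm : 2 ≤ m
  hn : 2 ≤ n
  inj : Function.Injective (Sum.elim (Sum.elim a b) (Sum.elim c d))
  notinE : ∀ i, a i ∉ E ∧ b i ∉ E
  notinE' : ∀ j, c j ∉ E ∧ d j ∉ E
  cover : Set.range a ∪ Set.range b ∪ Set.range c ∪ Set.range d ∪ E = Set.univ
  hE : ∀ v ∈ E, (G.neighborSet v).ncard = 2 ∧
    ∃ (i : Fin m) (p : G.Walk (a i) (b i)), IsInducedPath G p ∧ Odd p.length ∧
      (∀ x, Interior p x → x ∈ E) ∧ v ∈ p.support
  hpath : ∀ i, ∃! p : G.Walk (a i) (b i),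
    IsInducedPath G p ∧ Odd p.length ∧ (∀ x, Interior p x → x ∈ E)
  habne : ∀ i i', i ≠ i' →
    ¬ G.Adj (a i) (a i') ∧ ¬ G.Adj (a i) (b i') ∧ ¬ G.Adj (b i) (b i')
  hcd : ∀ j, ¬ G.Adj (c j) (d j)
  hcdall : ∀ j j', j ≠ j' →
    G.Adj (c j) (c j') ∧ G.Adj (c j) (d j') ∧ G.Adj (d j) (d j')
  cross : ∀ i j,
    (G.Adj (a i) (c j) ∧ G.Adj (b i) (d j) ∧ ¬ G.Adj (a i) (d j) ∧ ¬ G.Adj (b i) (c j)) ∨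
    (G.Adj (a i) (d j) ∧ G.Adj (b i) (c j) ∧ ¬ G.Adj (a i) (c j) ∧ ¬ G.Adj (b i) (d j))

/-- Path-cobipartite graph. -/
def IsPathCobipartite (G : SimpleGraph V) : Prop :=
  Berge G ∧ ∃ A B P : Set V,
    Disjoint A B ∧ Disjoint A P ∧ Disjoint B P ∧ A ∪ B ∪ P = Set.univ ∧
    A.Nonempty ∧ B.Nonempty ∧ G.IsClique A ∧ G.IsClique B ∧
    ∀ v ∈ P, (G.neighborSet v).ncard = 2 ∧
      ∃ a ∈ A, ∃ b ∈ B, ∃ p : G.Walk a b, IsInducedPath G p ∧ Odd p.length ∧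
        Interior p v ∧ (∀ x, Interior p x → x ∈ P) ∧
        (∀ w, G.Adj a w → w ∈ A ∪ P) ∧ (∀ w, G.Adj b w → w ∈ B ∪ P) ∧
        (∀ (a' b' : V), a' ∈ A → b' ∈ B → ∀ p' : G.Walk a' b',
          IsInducedPath G p' → Odd p'.length → Interior p' v →
          (∀ x, Interior p' x → x ∈ P) →
          {x | x ∈ p'.support} = {x | x ∈ p.support})

/-- `X` induces a path of `G` with one end in `A`, the other in `B` and interior
outside `A ∪ B`. -/
def PathSideOn (G : SimpleGraph V) (X A B : Set V) : Prop :=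
  ∃ a ∈ A, ∃ b ∈ B, ∃ p : G.Walk a b, IsInducedPath G p ∧
    {x | x ∈ p.support} = X ∧ ∀ x, Interior p x → x ∉ A ∪ B

/-- The block of a 2-join: keep the side `X` (with attachments `A`, `B`) and replace the
other side by a path `p_0, …, p_k`, `p_0` complete to `A` and `p_k` complete to `B`. -/
def blockGraph (G : SimpleGraph V) (X A B : Set V) (k : ℕ) :
    SimpleGraph (↥X ⊕ Fin (k + 1)) where
  Adj x y :=
    match x, y with
    | Sum.inl u, Sum.inl v => G.Adj u v
    | Sum.inl u, Sum.inr i => ((i : ℕ) = 0 ∧ (u : V) ∈ A) ∨ ((i : ℕ) = k ∧ (u : V) ∈ B)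
    | Sum.inr i, Sum.inl u => ((i : ℕ) = 0 ∧ (u : V) ∈ A) ∨ ((i : ℕ) = k ∧ (u : V) ∈ B)
    | Sum.inr i, Sum.inr j => (i : ℕ) + 1 = (j : ℕ) ∨ (j : ℕ) + 1 = (i : ℕ)
  symm := by
    constructor
    rintro (u | i) (v | j) h
    · exact h.symm
    · exact h
    · exact h
    · omega
  loopless := by
    constructor
    rintro (u | i) h
    · exact G.loopless.irrefl _ h
    · omega

/-- The graph `G'` obtained from a Bienstock graph `G` by adding two vertices
(`Sum.inr false` and `Sum.inr true`), each adjacent exactly to `u` and `s`. -/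
def bienstockExt (G : SimpleGraph V) (u s : V) : SimpleGraph (V ⊕ Bool) where
  Adj x y :=
    match x, y with
    | Sum.inl p, Sum.inl q => G.Adj p q
    | Sum.inl p, Sum.inr _ => p = u ∨ p = s
    | Sum.inr _, Sum.inl q => q = u ∨ q = s
    | Sum.inr _, Sum.inr _ => False
  symm := by
    constructor
    rintro (p | i) (q | j) h
    · exact h.symm
    · exact h
    · exact h
    · exact h
  loopless := by
    constructor
    rintro (p | i) h
    · exact G.loopless.irrefl _ h
    · exact h

end BSP

/-!
Let `x` and `y` be the first and the last vertex of `P` in `X1`. A vertex of `P` in `X1` with a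
neighbour on `P` outside `X1` lies in `A1 ∪ B1`. If `x ∈ A1`, then `x` is the only vertex of `P`
in `A1`: any other one would be a second neighbour in `A1` of the predecessor of `x`, which lies
in `A2`, and `P` is induced. Likewise `y` is the only vertex of `P` in `B1` if `y ∈ B1`. So if
`x` and `y` lie both in `A1` or both in `B1`, then `x = y`. Otherwise `P` changes sides only at
`x` and `y`: either it stays in `X1` from `x` to `y`, which is outcome (2) (read backwards when
`x ∈ B1`), or it returns to `X2` in between and meets `X1` only in the non-consecutive, hence
non-adjacent, vertices `x` and `y`, which is outcome (1).
-/

theorem Nat.exists_le_lt_and_not_succ {P : ℕ → Prop} {a b : ℕ} (hab : a ≤ b) (ha : P a)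
    (hb : ¬ P b) : ∃ k, a ≤ k ∧ k < b ∧ P k ∧ ¬ P (k + 1) := by
  induction b, hab using Nat.le_induction with
  | base => exact absurd ha hb
  | succ b hab ih =>
    by_cases hPb : P b
    · exact ⟨b, hab, b.lt_succ_self, hPb, hb⟩
    · obtain ⟨k, hak, hkb, hk⟩ := ih hPb
      exact ⟨k, hak, hkb.trans b.lt_succ_self, hk⟩

namespace SimpleGraph.Walk

variable {V : Type*} {G : SimpleGraph V} {u v : V}

theorem exists_eq_append_cons_append_cons (p : G.Walk u v) {i l : ℕ} (hil : i < l)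
    (hl : l < p.length) :
    ∃ (q₁ : G.Walk u (p.getVert i)) (h₁ : G.Adj (p.getVert i) (p.getVert (i + 1)))
      (q₂ : G.Walk (p.getVert (i + 1)) (p.getVert l))
      (h₂ : G.Adj (p.getVert l) (p.getVert (l + 1))) (q₃ : G.Walk (p.getVert (l + 1)) v),
      p = q₁.append (cons h₁ (q₂.append (cons h₂ q₃))) ∧
      (∀ x ∈ q₁.support, ∃ k ≤ i, p.getVert k = x) ∧
      (∀ x ∈ q₂.support, ∃ k, i < k ∧ k ≤ l ∧ p.getVert k = x) ∧
      (∀ x ∈ q₃.support, ∃ k, l < k ∧ k ≤ p.length ∧ p.getVert k = x) := by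
  have hend : (p.drop (i + 1)).getVert (l - (i + 1)) = p.getVert l := by
    rw [drop_getVert]; congr 1; omega
  refine ⟨p.take i, p.adj_getVert_succ (by omega),
    ((p.drop (i + 1)).take (l - (i + 1))).copy rfl hend, p.adj_getVert_succ hl, p.drop (l + 1),
    ?_, ?_, ?_, ?_⟩
  · apply ext_support
    simp only [support_append, support_cons, support_copy, support_take,
      drop_support_eq_support_drop_min, List.tail_cons]
    have hdrop : p.support.drop (l + 1) = (p.support.drop (i + 1)).drop (l - (i + 1) + 1) := by
      rw [List.drop_drop]; congr 1; omega
    rw [min_eq_left (by omega : i + 1 ≤ p.length), min_eq_left (by omega : l + 1 ≤ p.length),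
      hdrop, List.take_append_drop, List.take_append_drop]
  · intro x hx
    obtain ⟨k, rfl, -⟩ := mem_support_iff_exists_getVert.mp hx
    exact ⟨i ⊓ k, min_le_left _ _, (take_getVert _ _ _).symm⟩
  · intro x hx
    rw [support_copy] at hx
    obtain ⟨k, rfl, hk⟩ := mem_support_iff_exists_getVert.mp hx
    simp only [take_length, drop_length] at hk
    refine ⟨i + 1 + (l - (i + 1)) ⊓ k, by omega, by omega, ?_⟩
    rw [take_getVert, drop_getVert]
  · intro x hx
    obtain ⟨k, rfl, hk⟩ := mem_support_iff_exists_getVert.mp hx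
    rw [drop_length] at hk
    exact ⟨l + 1 + k, by omega, by omega, (drop_getVert _ _ _).symm⟩

theorem exists_first_last_getVert_mem (p : G.Walk u v) {S : Set V} (hu : u ∉ S) (hv : v ∉ S)
    (hS : ∃ x ∈ p.support, x ∈ S) :
    ∃ i l, i < l ∧ l < p.length ∧ p.getVert (i + 1) ∈ S ∧ p.getVert l ∈ S ∧
      ∀ k ≤ p.length, p.getVert k ∈ S → i < k ∧ k ≤ l := by
  classical
  have hX : ∃ k, k ≤ p.length ∧ p.getVert k ∈ S := by
    obtain ⟨x, hx, hxS⟩ := hS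
    obtain ⟨k, rfl, hk⟩ := mem_support_iff_exists_getVert.mp hx
    exact ⟨k, hk, hxS⟩
  obtain ⟨i, hi⟩ : ∃ i, Nat.find hX = i + 1 :=
    Nat.exists_eq_succ_of_ne_zero fun h => hu (p.getVert_zero ▸ h ▸ (Nat.find_spec hX).2)
  set l := Nat.findGreatest (fun k => p.getVert k ∈ S) p.length
  have hiS : p.getVert (i + 1) ∈ S := hi ▸ (Nat.find_spec hX).2
  have hlS : p.getVert l ∈ S :=
    Nat.findGreatest_spec (P := fun k => p.getVert k ∈ S) (hi ▸ (Nat.find_spec hX).1) hiS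
  have hln : l < p.length :=
    lt_of_le_of_ne (Nat.findGreatest_le _) fun h => hv (p.getVert_length ▸ h ▸ hlS)
  have hI : ∀ k ≤ p.length, p.getVert k ∈ S → i < k ∧ k ≤ l := fun k hk hkS =>
    ⟨by have := Nat.find_min' hX ⟨hk, hkS⟩; omega, Nat.le_findGreatest hk hkS⟩
  exact ⟨i, l, (hI l hln.le hlS).1, hln, hiS, hlS, hI⟩

end SimpleGraph.Walk

namespace BSP

variable {V : Type*} {G : SimpleGraph V} {u v : V} {X1 X2 A1 B1 A2 B2 : Set V}

theorem IsInducedPath.reverse {p : G.Walk u v} (hp : IsInducedPath G p) :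
    IsInducedPath G p.reverse := by
  refine ⟨hp.1.reverse, fun x hx y hy hxy => ?_⟩
  rw [Walk.support_reverse, List.mem_reverse] at hx hy
  rw [Walk.edges_reverse, List.mem_reverse]
  exact hp.2 x hx y hy hxy

theorem IsInducedPath.succ_eq_or_succ_eq_of_adj {p : G.Walk u v} (hp : IsInducedPath G p)
    {i j : ℕ} (hi : i ≤ p.length) (hj : j ≤ p.length)
    (h : G.Adj (p.getVert i) (p.getVert j)) : i + 1 = j ∨ j + 1 = i := by
  obtain ⟨k, hk, hkij⟩ := (Walk.mk_mem_edges_iff_exists p).mp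
    (hp.2 _ (p.getVert_mem_support i) _ (p.getVert_mem_support j) h)
  have inj := hp.1.getVert_injOn
  rcases Sym2.eq_iff.mp hkij with ⟨h₁, h₂⟩ | ⟨h₁, h₂⟩
  · have := inj (show k ≤ p.length by omega) hi h₁
    have := inj (show k + 1 ≤ p.length by omega) hj h₂
    omega
  · have := inj (show k ≤ p.length by omega) hj h₁
    have := inj (show k + 1 ≤ p.length by omega) hi h₂
    omega

namespace IsTwoJoinSplit

theorem swap (hJ : IsTwoJoinSplit G X1 X2 A1 B1 A2 B2) :
    IsTwoJoinSplit G X1 X2 B1 A1 B2 A2 := by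
  obtain ⟨h1, h2, h3, h4, h5, h6, h7, h8, h9, h10, h11, h12, h13, h14, h15⟩ := hJ
  exact ⟨h1, h2, h4, h3, h6, h5, h7.symm, h8.symm, h10, h9, h12, h11, h14, h13,
    fun x hx y hy hxy => (h15 x hx y hy hxy).symm⟩

theorem A1_subset_X1 (hJ : IsTwoJoinSplit G X1 X2 A1 B1 A2 B2) : A1 ⊆ X1 := hJ.2.2.1

theorem adj_of_mem_A1 (hJ : IsTwoJoinSplit G X1 X2 A1 B1 A2 B2) {x y : V} (hx : x ∈ A1)
    (hy : y ∈ A2) : G.Adj x y :=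
  hJ.2.2.2.2.2.2.2.2.2.2.2.2.1 x hx y hy

theorem mem_X2_iff (hJ : IsTwoJoinSplit G X1 X2 A1 B1 A2 B2) {x : V} : x ∈ X2 ↔ x ∉ X1 := by
  have hx : x ∈ X1 ∪ X2 := hJ.2.1 ▸ Set.mem_univ x
  exact ⟨fun h2 h1 => Set.disjoint_left.mp hJ.1 h1 h2, hx.resolve_left⟩

theorem mem_of_adj (hJ : IsTwoJoinSplit G X1 X2 A1 B1 A2 B2) {x y : V} (hx : x ∈ X1)
    (hy : y ∉ X1) (h : G.Adj x y) : (x ∈ A1 ∧ y ∈ A2) ∨ (x ∈ B1 ∧ y ∈ B2) :=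
  hJ.2.2.2.2.2.2.2.2.2.2.2.2.2.2 x hx y (hJ.mem_X2_iff.mpr hy) h

theorem mem_A1_or_mem_B1_of_adj (hJ : IsTwoJoinSplit G X1 X2 A1 B1 A2 B2) {x y : V}
    (hx : x ∈ X1) (hy : y ∉ X1) (h : G.Adj x y) : x ∈ A1 ∪ B1 :=
  (hJ.mem_of_adj hx hy h).imp And.left And.left

theorem mem_A2_of_adj (hJ : IsTwoJoinSplit G X1 X2 A1 B1 A2 B2) {x y : V}
    (hx : x ∈ A1) (hy : y ∉ X1) (h : G.Adj x y) : y ∈ A2 :=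
  (hJ.mem_of_adj (hJ.A1_subset_X1 hx) hy h).elim And.right
    fun h' => absurd h'.1 (Set.disjoint_left.mp hJ.2.2.2.2.2.2.1 hx)

end IsTwoJoinSplit

/-- Outcome (1) of the theorem. -/
def NearlyInside (G : SimpleGraph V) (X2 A1 B1 : Set V) (p : G.Walk u v) : Prop :=
  ∃ a ∈ A1, ∃ b ∈ B1, (∀ x ∈ p.support, x ∈ X2 ∪ {a, b}) ∧
    (a ∈ p.support → b ∈ p.support → ¬ G.Adj a b)

/-- Outcome (2) of the theorem; outcome (3) is this property of `p.reverse`. -/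
def CrossesOnce (G : SimpleGraph V) (X1 X2 A1 B1 A2 B2 : Set V) (p : G.Walk u v) : Prop :=
  ∃ a ∈ A1, ∃ b ∈ B1, ∃ a2 ∈ A2, ∃ b2 ∈ B2,
    ∃ (q1 : G.Walk u a2) (h1 : G.Adj a2 a) (q2 : G.Walk a b) (h2 : G.Adj b b2)
      (q3 : G.Walk b2 v),
      p = q1.append (Walk.cons h1 (q2.append (Walk.cons h2 q3))) ∧
      (∀ x ∈ q1.support, x ∈ X2) ∧ (∀ x ∈ q2.support, x ∈ X1) ∧
      (∀ x ∈ q3.support, x ∈ X2)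

theorem nearlyInside_reverse {p : G.Walk u v} :
    NearlyInside G X2 A1 B1 p.reverse ↔ NearlyInside G X2 A1 B1 p := by
  simp only [NearlyInside, Walk.support_reverse, List.mem_reverse]

theorem nearlyInside_of_forall_mem_X1_eq (hJ : IsTwoJoinSplit G X1 X2 A1 B1 A2 B2)
    {p : G.Walk u v} {z : V} (hz : z ∈ A1 ∪ B1) (hp : ∀ x ∈ p.support, x ∈ X1 → x = z) :
    NearlyInside G X2 A1 B1 p := by
  have hin : ∀ x ∈ p.support, x ∈ X2 ∪ {z} := fun x hx =>
    (em (x ∈ X1)).elim (fun h => .inr (hp x hx h)) (fun h => .inl (hJ.mem_X2_iff.mpr h))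
  obtain ⟨-, -, hA1, hB1, -, -, hAB, -, ⟨a, ha⟩, ⟨b, hb⟩, -⟩ := hJ
  rcases hz with hz | hz
  · refine ⟨z, hz, b, hb, fun x hx => ?_, fun _ hbp => ?_⟩
    · rcases hin x hx with h | h
      exacts [.inl h, .inr (.inl h)]
    · exact absurd (hp b hbp (hB1 hb) ▸ hz) (Set.disjoint_right.mp hAB hb)
  · refine ⟨a, ha, z, hz, fun x hx => ?_, fun hap _ => ?_⟩
    · rcases hin x hx with h | h
      exacts [.inl h, .inr (.inr h)]
    · exact absurd (hp a hap (hA1 ha) ▸ hz) (Set.disjoint_left.mp hAB ha)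

theorem forall_mem_X1_eq_of_mem_A1 (hJ : IsTwoJoinSplit G X1 X2 A1 B1 A2 B2)
    {p : G.Walk u v} (hp : IsInducedPath G p) {i l : ℕ} (hl : l ≤ p.length)
    (hI : ∀ k ≤ p.length, p.getVert k ∈ X1 → i < k ∧ k ≤ l)
    (hiA : p.getVert (i + 1) ∈ A1) (hlA : p.getVert l ∈ A1) :
    ∀ x ∈ p.support, x ∈ X1 → x = p.getVert (i + 1) := by
  have hil := hI l hl (hJ.A1_subset_X1 hlA)
  have hsA : p.getVert i ∈ A2 := hJ.mem_A2_of_adj hiA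
    (fun h => by have := hI i (by omega) h; omega) (p.adj_getVert_succ (by omega)).symm
  have := hp.succ_eq_or_succ_eq_of_adj hl (by omega) (hJ.adj_of_mem_A1 hlA hsA)
  intro x hx hxX
  obtain ⟨m, rfl, hm⟩ := Walk.mem_support_iff_exists_getVert.mp hx
  have := hI m hm hxX
  congr 1
  omega

theorem eq_or_eq_of_adj_of_not_mem_X1 (hJ : IsTwoJoinSplit G X1 X2 A1 B1 A2 B2)
    {p : G.Walk u v} (hp : IsInducedPath G p) {i l : ℕ} (hl : l < p.length)
    (hI : ∀ k ≤ p.length, p.getVert k ∈ X1 → i < k ∧ k ≤ l)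
    (hiA : p.getVert (i + 1) ∈ A1) (hlB : p.getVert l ∈ B1)
    {m k : ℕ} (hm : m ≤ p.length) (hmX : p.getVert m ∈ X1)
    (hkX : p.getVert k ∉ X1) (hmk : G.Adj (p.getVert m) (p.getVert k)) :
    m = i + 1 ∨ m = l := by
  have hmil := hI m hm hmX
  rcases hJ.mem_A1_or_mem_B1_of_adj hmX hkX hmk with hmA | hmB
  · have hsA : p.getVert i ∈ A2 := hJ.mem_A2_of_adj hiA
      (fun h => by have := hI i (by omega) h; omega) (p.adj_getVert_succ (by omega)).symm
    have := hp.succ_eq_or_succ_eq_of_adj hm (by omega) (hJ.adj_of_mem_A1 hmA hsA)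
    omega
  · have htB : p.getVert (l + 1) ∈ B2 := hJ.swap.mem_A2_of_adj hlB
      (fun h => by have := hI (l + 1) hl h; omega) (p.adj_getVert_succ hl)
    have := hp.succ_eq_or_succ_eq_of_adj hm hl (hJ.swap.adj_of_mem_A1 hmB htB)
    omega

theorem crossesOnce_of_forall_mem_X1_iff (hJ : IsTwoJoinSplit G X1 X2 A1 B1 A2 B2)
    {p : G.Walk u v} {i l : ℕ} (hil : i < l) (hl : l < p.length)
    (hI : ∀ k ≤ p.length, p.getVert k ∈ X1 ↔ i < k ∧ k ≤ l)
    (hiA : p.getVert (i + 1) ∈ A1) (hlB : p.getVert l ∈ B1) :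
    CrossesOnce G X1 X2 A1 B1 A2 B2 p := by
  obtain ⟨q1, h1, q2, h2, q3, hp, hq1, hq2, hq3⟩ :=
    p.exists_eq_append_cons_append_cons hil hl
  have hX2 : ∀ k ≤ p.length, (k ≤ i ∨ l < k) → p.getVert k ∈ X2 := fun k hk hk' =>
    hJ.mem_X2_iff.mpr fun h => by have := (hI k hk).mp h; omega
  have hsA := hJ.mem_A2_of_adj hiA (hJ.mem_X2_iff.mp (hX2 i (by omega) (by omega))) h1.symm
  have htB := hJ.swap.mem_A2_of_adj hlB (hJ.mem_X2_iff.mp (hX2 (l + 1) hl (by omega))) h2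
  refine ⟨_, hiA, _, hlB, _, hsA, _, htB, q1, h1, q2, h2, q3, hp,
    fun x hx => ?_, fun x hx => ?_, fun x hx => ?_⟩
  · obtain ⟨k, hk, rfl⟩ := hq1 x hx
    exact hX2 k (by omega) (.inl hk)
  · obtain ⟨k, hik, hkl, rfl⟩ := hq2 x hx
    exact (hI k (by omega)).mpr ⟨hik, hkl⟩
  · obtain ⟨k, hlk, hk, rfl⟩ := hq3 x hx
    exact hX2 k hk (.inr hlk)

theorem nearlyInside_or_crossesOnce (hJ : IsTwoJoinSplit G X1 X2 A1 B1 A2 B2)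
    {p : G.Walk u v} (hp : IsInducedPath G p) {i l : ℕ} (hil : i < l) (hl : l < p.length)
    (hI : ∀ k ≤ p.length, p.getVert k ∈ X1 → i < k ∧ k ≤ l)
    (hiA : p.getVert (i + 1) ∈ A1) (hlB : p.getVert l ∈ B1) :
    NearlyInside G X2 A1 B1 p ∨ CrossesOnce G X1 X2 A1 B1 A2 B2 p := by
  by_cases hgap : ∃ j, i < j ∧ j ≤ l ∧ p.getVert j ∉ X1
  swap
  · push Not at hgap
    exact .inr (crossesOnce_of_forall_mem_X1_iff hJ hil hl
      (fun k hk => ⟨hI k hk, fun hk' => hgap k hk'.1 hk'.2⟩) hiA hlB)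
  obtain ⟨j, hij, hjl, hj⟩ := hgap
  have hX1 : ∀ m ≤ p.length, p.getVert m ∈ X1 → m = i + 1 ∨ m = l := by
    intro m hm hmX
    have := hI m hm hmX
    rcases lt_or_gt_of_ne (show m ≠ j by rintro rfl; exact hj hmX) with hmj | hjm
    · obtain ⟨k, hmk, hkj, hk, hk1⟩ :=
        Nat.exists_le_lt_and_not_succ (P := fun k => p.getVert k ∈ X1) hmj.le hmX hj
      have := eq_or_eq_of_adj_of_not_mem_X1 hJ hp hl hI hiA hlB (by omega) hk hk1
        (p.adj_getVert_succ (by omega))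
      omega
    · obtain ⟨k, hjk, hkm, hk, hk1⟩ :=
        Nat.exists_le_lt_and_not_succ (P := fun k => p.getVert k ∉ X1) hjm.le hj (not_not.mpr hmX)
      have := eq_or_eq_of_adj_of_not_mem_X1 hJ hp hl hI hiA hlB (by omega) (not_not.mp hk1) hk
        (p.adj_getVert_succ (by omega)).symm
      omega
  refine .inl ⟨_, hiA, _, hlB, fun x hx => ?_, fun _ _ hadj => ?_⟩
  · obtain ⟨m, rfl, hm⟩ := Walk.mem_support_iff_exists_getVert.mp hx
    by_cases hmX : p.getVert m ∈ X1
    · rcases hX1 m hm hmX with rfl | rfl <;> simp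
    · exact .inl (hJ.mem_X2_iff.mpr hmX)
  · have := hp.succ_eq_or_succ_eq_of_adj (by omega) hl.le hadj
    have hj₁ : j ≠ i + 1 := by rintro rfl; exact hj (hJ.A1_subset_X1 hiA)
    have hj₂ : j ≠ l := by rintro rfl; exact hj (hJ.swap.A1_subset_X1 hlB)
    omega

theorem nearlyInside_or_crossesOnce_or_crossesOnce_reverse
    (hJ : IsTwoJoinSplit G X1 X2 A1 B1 A2 B2) {p : G.Walk u v} (hp : IsInducedPath G p)
    (hu : u ∈ X2) (hv : v ∈ X2) :
    NearlyInside G X2 A1 B1 p ∨ CrossesOnce G X1 X2 A1 B1 A2 B2 p ∨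
      CrossesOnce G X1 X2 A1 B1 A2 B2 p.reverse := by
  by_cases hX : ∃ x ∈ p.support, x ∈ X1
  swap
  · obtain ⟨a, ha⟩ : A1.Nonempty := hJ.2.2.2.2.2.2.2.2.1
    exact .inl (nearlyInside_of_forall_mem_X1_eq hJ (.inl ha) fun x hx hxX =>
      absurd ⟨x, hx, hxX⟩ hX)
  obtain ⟨i, l, hil, hln, hiX, hlX, hI⟩ :=
    p.exists_first_last_getVert_mem (hJ.mem_X2_iff.mp hu) (hJ.mem_X2_iff.mp hv) hX
  have hiAB := hJ.mem_A1_or_mem_B1_of_adj hiX (fun h => by have := hI i (by omega) h; omega)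
    (p.adj_getVert_succ (by omega)).symm
  have hlAB := hJ.mem_A1_or_mem_B1_of_adj hlX (fun h => by have := hI (l + 1) hln h; omega)
    (p.adj_getVert_succ hln)
  rcases hiAB with hiA | hiB <;> rcases hlAB with hlA | hlB
  · exact .inl (nearlyInside_of_forall_mem_X1_eq hJ (.inl hiA)
      (forall_mem_X1_eq_of_mem_A1 hJ hp hln.le hI hiA hlA))
  · exact (nearlyInside_or_crossesOnce hJ hp hil hln hI hiA hlB).imp_right .inl
  · have hrev : ∀ k, p.reverse.getVert k = p.getVert (p.length - k) := p.getVert_reverse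
    have hI' : ∀ k ≤ p.reverse.length, p.reverse.getVert k ∈ X1 →
        p.length - l - 1 < k ∧ k ≤ p.length - (i + 1) := fun k hk hkX => by
      rw [Walk.length_reverse] at hk
      have := hI _ (by omega) (hrev k ▸ hkX)
      omega
    have hlA' : p.reverse.getVert (p.length - l - 1 + 1) ∈ A1 := by
      rwa [hrev, show p.length - (p.length - l - 1 + 1) = l by omega]
    have hiB' : p.reverse.getVert (p.length - (i + 1)) ∈ B1 := by
      rwa [hrev, show p.length - (p.length - (i + 1)) = i + 1 by omega]
    rcases nearlyInside_or_crossesOnce hJ hp.reverse (by omega) (by simp; omega) hI' hlA' hiB'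
      with h | h
    exacts [.inl (nearlyInside_reverse.mp h), .inr (.inr h)]
  · exact .inl (nearlyInside_of_forall_mem_X1_eq hJ (.inr hiB)
      (forall_mem_X1_eq_of_mem_A1 hJ.swap hp hln.le hI hiB hlB))

end BSP

/-- Structure of an induced path with both ends in `X2`, relative to a 2-join. -/
theorem path_with_ends_in_X2 {V : Type*} (G : SimpleGraph V)
    (X1 X2 A1 B1 A2 B2 : Set V)
    (hJ : BSP.IsTwoJoinSplit G X1 X2 A1 B1 A2 B2)
    (u v : V) (hu : u ∈ X2) (hv : v ∈ X2)
    (p : G.Walk u v) (hp : BSP.IsInducedPath G p) :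
    (∃ a ∈ A1, ∃ b ∈ B1, (∀ x ∈ p.support, x ∈ X2 ∪ {a, b}) ∧
        (a ∈ p.support → b ∈ p.support → ¬ G.Adj a b)) ∨
    (∃ a ∈ A1, ∃ b ∈ B1, ∃ a2 ∈ A2, ∃ b2 ∈ B2,
      ∃ (q1 : G.Walk u a2) (h1 : G.Adj a2 a) (q2 : G.Walk a b) (h2 : G.Adj b b2)
        (q3 : G.Walk b2 v),
        p = q1.append (SimpleGraph.Walk.cons h1 (q2.append (SimpleGraph.Walk.cons h2 q3))) ∧
        (∀ x ∈ q1.support, x ∈ X2) ∧ (∀ x ∈ q2.support, x ∈ X1) ∧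
        (∀ x ∈ q3.support, x ∈ X2)) ∨
    (∃ a ∈ A1, ∃ b ∈ B1, ∃ a2 ∈ A2, ∃ b2 ∈ B2,
      ∃ (q1 : G.Walk v a2) (h1 : G.Adj a2 a) (q2 : G.Walk a b) (h2 : G.Adj b b2)
        (q3 : G.Walk b2 u),
        p.reverse =
          q1.append (SimpleGraph.Walk.cons h1 (q2.append (SimpleGraph.Walk.cons h2 q3))) ∧
        (∀ x ∈ q1.support, x ∈ X2) ∧ (∀ x ∈ q2.support, x ∈ X1) ∧
        (∀ x ∈ q3.support, x ∈ X2)) :=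
  BSP.nearlyInside_or_crossesOnce_or_crossesOnce_reverse hJ hp hu hv
end

section
/- Let G be a graph with a non-degenerate 2-join (X1,X2) with split (X1,X2,A1,B1,A2,B2). Then for each i ∈ {1,2} and every vertex v ∈ X_i, there exist induced paths P_a from some a ∈ A_i to v and P_b from some b ∈ B_i to v such that every interior vertex of P_a and of P_b lies in X_i \ (A_i ∪ B_i). -/
open SimpleGraph

universe u

/-! Fix a side `X` of the 2-join, with attachments `A`, `B`, and let `T = X \ (A ∪ B)`.
If some `w ∈ T` had no walk to `A` through `T`, the vertices reaching `w` inside `T` could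
only have neighbours in `T ∪ B`, so `G - (B ∪ B')` would separate them from `A'`; as `B` is
complete to `B'`, the complement of `G[B ∪ B']` is disconnected as well, and `B ∪ B'` would be a
skew cutset. So every vertex of `T`, and through a neighbour in `X \ B` every vertex of `B`,
is joined to `A` by a walk through `T`, and a shortest such walk is an induced path. The split is symmetric in `A ↔ B` and `X1 ↔ X2`. -/

namespace SimpleGraph

variable {V W : Type*} {G : SimpleGraph V} {H : SimpleGraph W}

theorem Walk.isChordless_of_length_eq_dist {u v : V} (p : G.Walk u v) (hp : p.length = G.dist u v) :
    p.IsChordless := by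
  suffices key : ∀ i j, i < j → j ≤ p.length → G.Adj (p.getVert i) (p.getVert j) → j = i + 1 by
    rw [isChordless_iff_forall_mem_edges]
    intro x y hx hy hxy
    obtain ⟨i, rfl, hi⟩ := mem_support_iff_exists_getVert.mp hx
    obtain ⟨j, rfl, hj⟩ := mem_support_iff_exists_getVert.mp hy
    rw [mk_mem_edges_iff_exists]
    rcases lt_trichotomy i j with hij | rfl | hij
    · obtain rfl := key i j hij hj hxy
      exact ⟨i, by omega, rfl⟩
    · exact absurd hxy (G.loopless.irrefl _)
    · obtain rfl := key j i hij hi hxy.symm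
      exact ⟨j, by omega, Sym2.eq_swap⟩
  intro i j hij hj hadj
  have hshort := G.dist_le ((p.take i).append (cons hadj (p.drop j)))
  simp only [length_append, length_cons, take_length, drop_length] at hshort
  omega

theorem Walk.IsChordless.map (f : H ↪g G) {x y : W} {p : H.Walk x y} (hp : p.IsChordless) :
    (p.map f.toHom).IsChordless := by
  rw [isChordless_iff_forall_mem_edges] at hp ⊢
  simp only [support_map, edges_map, List.mem_map]
  rintro _ _ ⟨x, hx, rfl⟩ ⟨y, hy, rfl⟩ hadj
  exact ⟨s(x, y), hp hx hy (f.map_adj_iff.mp hadj), rfl⟩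

theorem not_connected_induce_of_forall_adj_mem {S R : Set V} {x y : V} (hx : x ∈ S)
    (hxR : x ∈ R) (hy : y ∈ S) (hyR : y ∉ R) (hR : ∀ u ∈ R, ∀ v ∈ S, G.Adj u v → v ∈ R) :
    ¬ (G.induce S).Connected := by
  intro hconn
  obtain ⟨q⟩ := hconn.preconnected ⟨x, hx⟩ ⟨y, hy⟩
  obtain ⟨d, -, hdR, hdR'⟩ := q.exists_boundary_dart (Subtype.val ⁻¹' R) hxR hyR
  exact hdR' (hR _ hdR _ d.snd.2 d.adj)

end SimpleGraph

namespace BSP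

variable {V : Type*} {G : SimpleGraph V}

theorem isInducedWalk_iff_isChordless {u v : V} (p : G.Walk u v) :
    IsInducedWalk G p ↔ p.IsChordless := by
  rw [Walk.isChordless_iff_forall_mem_edges]
  exact ⟨fun h _ _ hx hy => h _ hx _ hy, fun h _ hx _ hy => h hx hy⟩

theorem ReachIn.refl {S : Set V} {u : V} (hu : u ∈ S) : ReachIn G S u u :=
  ⟨.nil, by simpa using hu⟩

theorem ReachIn.mono {S S' : Set V} {u v : V} (h : ReachIn G S u v) (hSS' : S ⊆ S') :
    ReachIn G S' u v :=
  let ⟨p, hp⟩ := h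
  ⟨p, fun x hx => hSS' (hp x hx)⟩

theorem ReachIn.cons {S : Set V} {u v w : V} (hadj : G.Adj u v) (hu : u ∈ S)
    (h : ReachIn G S v w) : ReachIn G S u w := by
  obtain ⟨p, hp⟩ := h
  refine ⟨.cons hadj p, ?_⟩
  simpa [hu] using hp

theorem ReachIn.concat {S : Set V} {u v w : V} (h : ReachIn G S u v) (hadj : G.Adj v w)
    (hw : w ∈ S) : ReachIn G S u w := by
  obtain ⟨p, hp⟩ := h
  refine ⟨p.concat hadj, ?_⟩
  simp only [Walk.support_concat, List.mem_append, List.mem_singleton]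
  rintro x (hx | rfl)
  exacts [hp x hx, hw]

theorem ReachIn.exists_isInducedPath {S : Set V} {u v : V} (h : ReachIn G S u v) :
    ∃ p : G.Walk u v, IsInducedPath G p ∧ ∀ x ∈ p.support, x ∈ S := by
  obtain ⟨q, hq⟩ := h
  obtain ⟨p, hp⟩ := (q.induce S hq).reachable.exists_walk_length_eq_dist
  let f := (Embedding.induce S (G := G))
  have hpath : (p.map f.toHom).IsPath := (p.isPath_of_length_eq_dist hp).map f.injective
  have hind : (p.map f.toHom).IsChordless := (p.isChordless_of_length_eq_dist hp).map f
  have hsupp : ∀ x ∈ (p.map f.toHom).support, x ∈ S := by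
    simp only [Walk.support_map, List.mem_map]
    rintro _ ⟨y, -, rfl⟩
    exact y.2
  exact ⟨_, ⟨hpath, (isInducedWalk_iff_isChordless _).mpr hind⟩, hsupp⟩

theorem isSkewCutset_union_of_complete {B B' : Set V} (hB : B.Nonempty) (hB' : B'.Nonempty)
    (hBB' : Disjoint B B') (hcomplete : ∀ b ∈ B, ∀ b' ∈ B', G.Adj b b')
    (hne : (B ∪ B')ᶜ.Nonempty) (hsep : ¬ (G.induce (B ∪ B')ᶜ).Connected) :
    IsSkewCutset G (B ∪ B') := by
  obtain ⟨b, hb⟩ := hB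
  obtain ⟨b', hb'⟩ := hB'
  refine ⟨hne, ⟨b, .inl hb⟩, disjoint_compl_left, Set.compl_union_self _, hsep, ?_⟩
  refine not_connected_induce_of_forall_adj_mem (.inl hb) hb (.inr hb')
    (Set.disjoint_right.mp hBB' hb') ?_
  rintro u hu v (hv | hv) huv
  · exact hv
  · exact absurd (hcomplete u hu v hv) huv.2

theorem IsTwoJoinSplit.swap_s13 {X1 X2 A1 B1 A2 B2 : Set V}
    (h : IsTwoJoinSplit G X1 X2 A1 B1 A2 B2) : IsTwoJoinSplit G X1 X2 B1 A1 B2 A2 := by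
  obtain ⟨hX, hcover, hA1, hB1, hA2, hB2, hAB1, hAB2, hA1ne, hB1ne, hA2ne, hB2ne,
    hAA, hBB, hcross⟩ := h
  exact ⟨hX, hcover, hB1, hA1, hB2, hA2, hAB1.symm, hAB2.symm, hB1ne, hA1ne, hB2ne, hA2ne,
    hBB, hAA, fun x hx y hy hxy => (hcross x hx y hy hxy).symm⟩

theorem IsTwoJoinSplit.symm {X1 X2 A1 B1 A2 B2 : Set V}
    (h : IsTwoJoinSplit G X1 X2 A1 B1 A2 B2) : IsTwoJoinSplit G X2 X1 A2 B2 A1 B1 := by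
  obtain ⟨hX, hcover, hA1, hB1, hA2, hB2, hAB1, hAB2, hA1ne, hB1ne, hA2ne, hB2ne,
    hAA, hBB, hcross⟩ := h
  refine ⟨hX.symm, Set.union_comm X1 X2 ▸ hcover, hA2, hB2, hA1, hB1, hAB2, hAB1, hA2ne, hB2ne,
    hA1ne, hB1ne, fun a ha a' ha' => (hAA a' ha' a ha).symm,
    fun b hb b' hb' => (hBB b' hb' b hb).symm, fun x hx y hy hxy => ?_⟩
  rcases hcross y hy x hx hxy.symm with ⟨hyA, hxA⟩ | ⟨hyB, hxB⟩
  · exact .inl ⟨hxA, hyA⟩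
  · exact .inr ⟨hxB, hyB⟩

variable {X Y A B A' B' : Set V}

theorem exists_reachIn_of_not_isSkewCutset (hJ : IsTwoJoinSplit G X Y A B A' B')
    (hsk : ¬ IsSkewCutset G (B ∪ B')) {w : V} (hw : w ∈ X \ (A ∪ B)) :
    ∃ a ∈ A, ReachIn G (insert a (X \ (A ∪ B))) a w := by
  obtain ⟨hXY, hcover, -, hB, hA', hB', -, hAB', -, hBne, hA'ne, hB'ne, -, hBB', hcross⟩ := hJ
  by_contra! hcon
  apply hsk
  set T := X \ (A ∪ B)
  have hT : T ⊆ (B ∪ B')ᶜ := by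
    rintro x ⟨hxX, hxAB⟩ (hxB | hxB')
    exacts [hxAB (.inr hxB), Set.disjoint_left.mp hXY hxX (hB' hxB')]
  obtain ⟨a', ha'⟩ := hA'ne
  have ha'B : a' ∈ (B ∪ B')ᶜ := by
    rintro (ha'B | ha'B')
    exacts [Set.disjoint_right.mp hXY (hA' ha') (hB ha'B), Set.disjoint_left.mp hAB' ha' ha'B']
  refine isSkewCutset_union_of_complete hBne hB'ne
    (hXY.mono hB hB') hBB' ⟨w, hT hw⟩ ?_
  refine not_connected_induce_of_forall_adj_mem (R := {x | ReachIn G T x w}) (hT hw)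
    (ReachIn.refl hw) ha'B (fun ⟨p, hp⟩ => Set.disjoint_right.mp hXY (hA' ha')
      (hp a' p.start_mem_support).1) ?_
  intro x hx y hy hxy
  have hxT : x ∈ T := hx.elim fun p hp => hp x p.start_mem_support
  have hyX : y ∈ X := by
    refine (hcover.symm ▸ Set.mem_univ y : y ∈ X ∪ Y).resolve_right fun hyY => ?_
    rcases hcross x hxT.1 y hyY hxy with ⟨hxA, -⟩ | ⟨hxB, -⟩
    exacts [hxT.2 (.inl hxA), hxT.2 (.inr hxB)]
  have hyA : y ∉ A := fun hyA =>
    hcon y hyA ((hx.mono (Set.subset_insert y T)).cons hxy.symm (Set.mem_insert y T))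
  have hyT : y ∈ T := ⟨hyX, fun h => h.elim hyA (hy ∘ .inl)⟩
  exact hx.cons hxy.symm hyT

theorem exists_isInducedPath_of_not_isSkewCutset (hJ : IsTwoJoinSplit G X Y A B A' B')
    (hsk : ¬ IsSkewCutset G (B ∪ B')) (hBX : ∀ b ∈ B, ∃ x ∈ X \ B, G.Adj b x)
    {v : V} (hv : v ∈ X) :
    ∃ a ∈ A, ∃ p : G.Walk a v, IsInducedPath G p ∧ ∀ x, Interior p x → x ∈ X \ (A ∪ B) := by
  set T := X \ (A ∪ B)
  have hreach : ∃ a ∈ A, ReachIn G (insert a (insert v T)) a v := by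
    have hmono : ∀ a, insert a T ⊆ insert a (insert v T) :=
      fun a => Set.insert_subset_insert (Set.subset_insert v T)
    by_cases hvA : v ∈ A
    · exact ⟨v, hvA, ReachIn.refl (Set.mem_insert v _)⟩
    by_cases hvB : v ∈ B
    · obtain ⟨u, ⟨huX, huB⟩, hvu⟩ := hBX v hvB
      have hvS : ∀ a, v ∈ insert a (insert v T) := fun a => .inr (.inl rfl)
      by_cases huA : u ∈ A
      · exact ⟨u, huA, (ReachIn.refl (Set.mem_insert u _)).concat hvu.symm (hvS u)⟩
      obtain ⟨a, ha, hau⟩ := exists_reachIn_of_not_isSkewCutset hJ hsk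
        ⟨huX, fun h => h.elim huA huB⟩
      exact ⟨a, ha, (hau.mono (hmono a)).concat hvu.symm (hvS a)⟩
    obtain ⟨a, ha, hav⟩ := exists_reachIn_of_not_isSkewCutset hJ hsk
      ⟨hv, fun h => h.elim hvA hvB⟩
    exact ⟨a, ha, hav.mono (hmono a)⟩
  obtain ⟨a, ha, hav⟩ := hreach
  obtain ⟨p, hp, hpS⟩ := hav.exists_isInducedPath
  refine ⟨a, ha, p, hp, fun x ⟨hx, hxa, hxv⟩ => ?_⟩
  simpa [hxa, hxv] using hpS x hx

end BSP

/-- In a graph with a non-degenerate 2-join, every vertex of `X_i` is joined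
to `A_i` and to `B_i` by induced paths whose interior lies in `X_i \ (A_i ∪ B_i)`. -/
theorem nondegenerate_two_join_connectivity {V : Type*} (G : SimpleGraph V)
    (X1 X2 A1 B1 A2 B2 : Set V)
    (hJ : BSP.IsTwoJoinSplit G X1 X2 A1 B1 A2 B2)
    (hnd : ¬ BSP.IsDegenerate G X1 X2 A1 B1 A2 B2) :
    (∀ v ∈ X1,
      (∃ a ∈ A1, ∃ p : G.Walk a v, BSP.IsInducedPath G p ∧
        ∀ x, BSP.Interior p x → x ∈ X1 \ (A1 ∪ B1)) ∧
      (∃ b ∈ B1, ∃ p : G.Walk b v, BSP.IsInducedPath G p ∧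
        ∀ x, BSP.Interior p x → x ∈ X1 \ (A1 ∪ B1))) ∧
    (∀ v ∈ X2,
      (∃ a ∈ A2, ∃ p : G.Walk a v, BSP.IsInducedPath G p ∧
        ∀ x, BSP.Interior p x → x ∈ X2 \ (A2 ∪ B2)) ∧
      (∃ b ∈ B2, ∃ p : G.Walk b v, BSP.IsInducedPath G p ∧
        ∀ x, BSP.Interior p x → x ∈ X2 \ (A2 ∪ B2))) := by
  unfold BSP.IsDegenerate at hnd
  push Not at hnd
  obtain ⟨hA1, hB1, hA2, hB2, hskA, hskB, -⟩ := hnd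
  refine ⟨fun v hv => ⟨?_, ?_⟩, fun v hv => ⟨?_, ?_⟩⟩
  · exact BSP.exists_isInducedPath_of_not_isSkewCutset hJ hskB hB1 hv
  · simpa only [Set.union_comm B1 A1] using
      BSP.exists_isInducedPath_of_not_isSkewCutset hJ.swap_s13 hskA hA1 hv
  · exact BSP.exists_isInducedPath_of_not_isSkewCutset hJ.symm
      (Set.union_comm B1 B2 ▸ hskB) hB2 hv
  · simpa only [Set.union_comm B2 A2] using
      BSP.exists_isInducedPath_of_not_isSkewCutset hJ.symm.swap_s13
        (Set.union_comm A1 A2 ▸ hskA) hA2 hv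
end
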